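/- If Q is an acyclic quiver, then in the derived category D^b(kQ) of the path algebra, every object X satisfies: for all but finitely many integers i, Hom_{D^b(kQ)}(X, S₂^i Y) = 0, where S₂ = S[-2] is the square-shifted Serre functor; hence the orbit category D^b(kQ)/S₂ is Hom-finite. -/

import Mathlib

open CategoryTheory CategoryTheory.Limits

/-!
For an object `Z`, consider the set of shifts `t` such that some module maps nontrivially to
`Z⟦t⟧`. Since every object is a finite sum of shifted modules, and modules only see each other in
degrees `0` and `1`, this support is finite, and a nonzero morphism `W ⟶ V` forces the supports
of `W` and `V` to meet. Serre duality moves the support of `S₂ Z` to the right by at least `1` and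
at most `2`, and, through the adjunction `S₂ ⊣ S₂⁻¹`, that of `S₂⁻¹ Z` to the left by a bounded
amount. Hence for all but finitely many `i` the supports of `X` and `S₂^i Y` are disjoint, so
`Hom(X, S₂^i Y) = 0`.
-/

def fpow {D : Type*} [Category D] (F : D ⥤ D) : ℕ → D ⥤ D
  | 0 => 𝟭 D
  | n + 1 => F ⋙ fpow F n

def epow {D : Type*} [Category D] (e : D ≌ D) : ℤ → D ⥤ D
  | Int.ofNat n => fpow e.functor n
  | Int.negSucc n => fpow e.inverse (n + 1)

section Nontrivial

variable {C : Type*} [Category C] [HasZeroMorphisms C]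

lemma nontrivial_hom_of_isSplitMono {A V W : C} (i : A ⟶ W) [IsSplitMono i]
    (h : Nontrivial (A ⟶ V)) : Nontrivial (A ⟶ W) := by
  obtain ⟨f, hf⟩ := exists_ne (0 : A ⟶ V)
  refine nontrivial_of_ne i 0 fun hi => hf ?_
  simpa using congrArg (· ≫ retraction i ≫ f) hi

lemma biproduct.exists_nontrivial_hom_from_summand {J : Type*} {f : J → C} [HasBiproduct f]
    {W : C} (h : Nontrivial (⨁ f ⟶ W)) : ∃ j, Nontrivial (f j ⟶ W) := by
  by_contra! hf
  exact not_nontrivial_iff_subsingleton.mpr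
    ⟨fun g g' => biproduct.hom_ext' g g' fun _ => Subsingleton.elim _ _⟩ h

lemma biproduct.exists_nontrivial_hom_to_summand {J : Type*} {f : J → C} [HasBiproduct f]
    {W : C} (h : Nontrivial (W ⟶ ⨁ f)) : ∃ j, Nontrivial (W ⟶ f j) := by
  by_contra! hf
  exact not_nontrivial_iff_subsingleton.mpr
    ⟨fun g g' => biproduct.hom_ext g g' fun _ => Subsingleton.elim _ _⟩ h

end Nontrivial

lemma FiniteDimensional.directSum_of_finite_support {k ι : Type*} [DivisionRing k]
    {M : ι → Type*} [∀ i, AddCommGroup (M i)] [∀ i, Module k (M i)]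
    [∀ i, FiniteDimensional k (M i)] (h : {i | Nontrivial (M i)}.Finite) :
    FiniteDimensional k (DirectSum ι M) := by
  let Φ : DirectSum ι M →ₗ[k] ∀ i : h.toFinset, M i :=
    LinearMap.pi fun i => DirectSum.component k ι M i
  refine Module.Finite.of_injective Φ ((injective_iff_map_eq_zero Φ).mpr fun x hx => ?_)
  refine DirectSum.ext_component k fun i => ?_
  by_cases hi : i ∈ h.toFinset
  · exact congr_fun hx ⟨i, hi⟩
  · have : Subsingleton (M i) := not_nontrivial_iff_subsingleton.mp (by simpa using hi)
    exact Subsingleton.elim _ _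

section ShiftSupport

variable {D : Type*} [Category D] [HasShift D ℤ]

def shiftHomEquiv (M Z : D) {s t : ℤ} (h : s + t = 0) : (M⟦s⟧ ⟶ Z) ≃ (M ⟶ Z⟦t⟧) :=
  (shiftEquiv' D s t h).toAdjunction.homEquiv M Z

lemma nontrivial_hom_shift_iff {M W : D} {a b c : ℤ} (h : a + b = c) :
    Nontrivial (M ⟶ W⟦a⟧) ↔ Nontrivial (M⟦b⟧ ⟶ W⟦c⟧) :=
  ((Functor.FullyFaithful.ofFullyFaithful (shiftFunctor D b)).homEquiv.trans
    ((Iso.refl _).homCongr ((shiftFunctorAdd' D a b c h).app W).symm)).nontrivial_congr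

variable (IsMod : D → Prop)

def shiftSupport (Z : D) : Set ℤ :=
  {t | ∃ M, IsMod M ∧ Nontrivial (M ⟶ Z⟦t⟧)}

variable {IsMod}

lemma mem_shiftSupport_of_nontrivial {M Z : D} (hM : IsMod M) {s t : ℤ} (h : s + t = 0)
    (hMZ : Nontrivial (M⟦s⟧ ⟶ Z)) : t ∈ shiftSupport IsMod Z :=
  ⟨M, hM, (shiftHomEquiv M Z h).nontrivial_congr.mp hMZ⟩

lemma shiftSupport_congr {Z Z' : D} (e : Z ≅ Z') :
    shiftSupport IsMod Z = shiftSupport IsMod Z' :=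
  Set.ext fun t => exists_congr fun M => and_congr_right fun _ =>
    ((Iso.refl M).homCongr ((shiftFunctor D t).mapIso e)).nontrivial_congr

lemma mem_shiftSupport_shift {Z : D} {e t : ℤ} :
    t ∈ shiftSupport IsMod (Z⟦e⟧) ↔ e + t ∈ shiftSupport IsMod Z :=
  exists_congr fun M => and_congr_right fun _ =>
    ((Iso.refl M).homCongr ((shiftFunctorAdd D e t).app Z).symm).nontrivial_congr

lemma shiftSupport_fpow_subset {F : D ⥤ D} {p q : ℤ}
    (hF : ∀ {Z : D} {a b : ℤ}, shiftSupport IsMod Z ⊆ Set.Icc a b →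
      shiftSupport IsMod (F.obj Z) ⊆ Set.Icc (a + p) (b + q))
    (n : ℕ) {Z : D} {a b : ℤ} (hZ : shiftSupport IsMod Z ⊆ Set.Icc a b) :
    shiftSupport IsMod ((fpow F n).obj Z) ⊆ Set.Icc (a + n * p) (b + n * q) := by
  induction n generalizing Z a b with
  | zero => simpa [fpow] using hZ
  | succ n ih =>
    refine (ih (hF hZ)).trans (Set.Icc_subset_Icc (le_of_eq ?_) (le_of_eq ?_)) <;>
      push_cast <;> ring

variable [HasZeroMorphisms D]

variable (IsMod) in
def IsHereditary : Prop :=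
  ∀ M N : D, IsMod M → IsMod N → ∀ i : ℤ, i ≠ 0 → i ≠ 1 → ∀ f : M ⟶ N⟦i⟧, f = 0

variable (IsMod) in
def HasShiftDecompositions [HasFiniteBiproducts D] : Prop :=
  ∀ X : D, ∃ (n : ℕ) (M : Fin n → D) (d : Fin n → ℤ),
    (∀ j, IsMod (M j)) ∧ Nonempty (X ≅ ⨁ fun j => (M j)⟦d j⟧)

lemma IsHereditary.shiftSupport_subset (hered : IsHereditary IsMod) {N : D} (hN : IsMod N) :
    shiftSupport IsMod N ⊆ Set.Icc 0 1 := by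
  rintro t ⟨M, hM, h⟩
  rw [Set.mem_Icc]
  by_contra ht
  obtain ⟨f, hf⟩ := exists_ne (0 : M ⟶ N⟦t⟧)
  exact hf (hered M N hM hN t (by omega) (by omega) f)

lemma shiftSupport_biproduct_subset {J : Type*} {f : J → D} [HasBiproduct f] :
    shiftSupport IsMod (⨁ f) ⊆ ⋃ j, shiftSupport IsMod (f j) := by
  rintro t ⟨M, hM, h⟩
  obtain ⟨j, hj⟩ := biproduct.exists_nontrivial_hom_to_summand
    ((shiftHomEquiv M _ (neg_add_cancel t)).nontrivial_congr.mpr h)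
  exact Set.mem_iUnion.mpr ⟨j, mem_shiftSupport_of_nontrivial hM (neg_add_cancel t) hj⟩

variable [HasFiniteBiproducts D]

lemma shiftSupport_finite (hered : IsHereditary IsMod) (hdec : HasShiftDecompositions IsMod)
    (Z : D) : (shiftSupport IsMod Z).Finite := by
  obtain ⟨n, P, c, hP, ⟨e⟩⟩ := hdec Z
  rw [shiftSupport_congr e]
  refine (Set.finite_iUnion fun l => Set.finite_Icc (-c l) (1 - c l)).subset
    (shiftSupport_biproduct_subset.trans (Set.iUnion_mono fun l t ht => ?_))
  have := hered.shiftSupport_subset (hP l) (mem_shiftSupport_shift.mp ht)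
  simp only [Set.mem_Icc] at this ⊢
  omega

lemma exists_shiftSupport_subset_Icc (hered : IsHereditary IsMod)
    (hdec : HasShiftDecompositions IsMod) (Z : D) :
    ∃ a b, shiftSupport IsMod Z ⊆ Set.Icc a b :=
  bddBelow_bddAbove_iff_subset_Icc.mp
    ⟨(shiftSupport_finite hered hdec Z).bddBelow, (shiftSupport_finite hered hdec Z).bddAbove⟩

lemma shiftSupport_inter_nonempty (hdec : HasShiftDecompositions IsMod) {W V : D}
    (h : Nontrivial (W ⟶ V)) : (shiftSupport IsMod W ∩ shiftSupport IsMod V).Nonempty := by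
  obtain ⟨n, P, c, hP, ⟨e⟩⟩ := hdec W
  rw [shiftSupport_congr e]
  obtain ⟨l, hl⟩ := biproduct.exists_nontrivial_hom_from_summand
    ((e.homCongr (Iso.refl V)).nontrivial_congr.mp h)
  exact ⟨-c l,
    mem_shiftSupport_of_nontrivial (hP l) (add_neg_cancel _)
      (nontrivial_hom_of_isSplitMono (biproduct.ι (fun j => (P j)⟦c j⟧) l) hl),
    mem_shiftSupport_of_nontrivial (hP l) (add_neg_cancel _) hl⟩

end ShiftSupport

section Serre

variable {k D : Type*} [Field k] [Category D] [Preadditive D] [Linear k D] [HasShift D ℤ]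
  (S₂ : D ≌ D)

lemma nontrivial_hom_iff_of_serre
    (hSerre : ∀ X Y : D,
      Nonempty ((X ⟶ Y) ≃ₗ[k] Module.Dual k (Y ⟶ (S₂.functor.obj X)⟦(2 : ℤ)⟧)))
    (M Z : D) (t : ℤ) :
    Nontrivial (M ⟶ (S₂.functor.obj Z)⟦t⟧) ↔ Nontrivial (Z ⟶ M⟦2 - t⟧) := by
  obtain ⟨e⟩ := hSerre Z (M⟦2 - t⟧)
  calc Nontrivial (M ⟶ (S₂.functor.obj Z)⟦t⟧)
      ↔ Nontrivial (M⟦2 - t⟧ ⟶ (S₂.functor.obj Z)⟦(2 : ℤ)⟧) := nontrivial_hom_shift_iff (by ring)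
    _ ↔ Nontrivial (Module.Dual k (M⟦2 - t⟧ ⟶ (S₂.functor.obj Z)⟦(2 : ℤ)⟧)) :=
        (Module.nontrivial_dual_iff k).symm
    _ ↔ Nontrivial (Z ⟶ M⟦2 - t⟧) := e.toEquiv.nontrivial_congr.symm

variable [HasFiniteBiproducts D] {IsMod : D → Prop} (hered : IsHereditary IsMod)
  (hdec : HasShiftDecompositions IsMod)
  (hSerre : ∀ X Y : D,
    Nonempty ((X ⟶ Y) ≃ₗ[k] Module.Dual k (Y ⟶ (S₂.functor.obj X)⟦(2 : ℤ)⟧)))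
include hered hdec hSerre

lemma shiftSupport_functor_subset {Z : D} {a b : ℤ} (hZ : shiftSupport IsMod Z ⊆ Set.Icc a b) :
    shiftSupport IsMod (S₂.functor.obj Z) ⊆ Set.Icc (a + 1) (b + 2) := by
  rintro t ⟨M, hM, h⟩
  obtain ⟨s, hsZ, hsM⟩ :=
    shiftSupport_inter_nonempty hdec ((nontrivial_hom_iff_of_serre S₂ hSerre M Z t).mp h)
  have hs := hZ hsZ
  have hst := hered.shiftSupport_subset hM (mem_shiftSupport_shift.mp hsM)
  simp only [Set.mem_Icc] at hs hst ⊢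
  omega

lemma shiftSupport_inverse_subset {Z : D} {a b : ℤ} (hZ : shiftSupport IsMod Z ⊆ Set.Icc a b) :
    shiftSupport IsMod (S₂.inverse.obj Z) ⊆ Set.Icc (a - 3) (b - 1) := by
  rintro t ⟨M, hM, h⟩
  have hMt : shiftSupport IsMod (M⟦-t⟧) ⊆ Set.Icc t (t + 1) := fun s hs => by
    have := hered.shiftSupport_subset hM (mem_shiftSupport_shift.mp hs)
    simp only [Set.mem_Icc] at this ⊢
    omega
  have h' : Nontrivial (S₂.functor.obj (M⟦-t⟧) ⟶ Z) :=
    ((S₂.toAdjunction.homEquiv _ _).trans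
      (shiftHomEquiv M _ (neg_add_cancel t))).nontrivial_congr.mpr h
  obtain ⟨s, hsM, hsZ⟩ := shiftSupport_inter_nonempty hdec h'
  have hs := hZ hsZ
  have hst := shiftSupport_functor_subset S₂ hered hdec hSerre hMt hsM
  simp only [Set.mem_Icc] at hs hst ⊢
  omega

lemma shiftSupport_epow_subset (i : ℤ) {Z : D} {a b : ℤ}
    (hZ : shiftSupport IsMod Z ⊆ Set.Icc a b) :
    shiftSupport IsMod ((epow S₂ i).obj Z) ⊆ Set.Icc (a + min i (3 * i)) (b + max i (2 * i)) := by
  rcases i with n | n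
  · refine (shiftSupport_fpow_subset (p := 1) (q := 2)
      (shiftSupport_functor_subset S₂ hered hdec hSerre) n hZ).trans ?_
    rw [Int.ofNat_eq_natCast]
    exact Set.Icc_subset_Icc (by omega) (by omega)
  · refine (shiftSupport_fpow_subset (p := -3) (q := -1)
      (shiftSupport_inverse_subset S₂ hered hdec hSerre) (n + 1) hZ).trans ?_
    rw [Int.negSucc_eq]
    exact Set.Icc_subset_Icc (by push_cast; omega) (by push_cast; omega)

end Serre

theorem cluster_category_hom_finite_general (k : Type*) [Field k]
    (D : Type*) [Category D] [Preadditive D] [Linear k D] [HasShift D ℤ]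
    [HasFiniteBiproducts D]
    (hfin : ∀ X Y : D, FiniteDimensional k (X ⟶ Y))
    (S₂ : D ≌ D)
    (hSerre : ∀ X Y : D,
      Nonempty ((X ⟶ Y) ≃ₗ[k] Module.Dual k (Y ⟶ (S₂.functor.obj X)⟦(2 : ℤ)⟧)))
    (Module? : D → Prop)
    -- hereditariness: every object is a finite direct sum of shifts of modules
    (hdec : ∀ X : D, ∃ (n : ℕ) (M : Fin n → D) (d : Fin n → ℤ),
      (∀ j, Module? (M j)) ∧ Nonempty (X ≅ ⨁ fun j => (M j)⟦d j⟧))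
    -- and morphisms between modules exist only in shift-degrees 0 and 1
    (hhered : ∀ M N : D, Module? M → Module? N →
      ∀ i : ℤ, i ≠ 0 → i ≠ 1 → ∀ f : M ⟶ N⟦i⟧, f = 0) :
    ∀ X Y : D,
      {i : ℤ | ∃ f : X ⟶ (epow S₂ i).obj Y, f ≠ 0}.Finite ∧
      FiniteDimensional k (DirectSum ℤ fun i : ℤ => (X ⟶ (epow S₂ i).obj Y)) := by
  intro X Y
  obtain ⟨a, b, hX⟩ := exists_shiftSupport_subset_Icc hhered hdec X
  obtain ⟨a', b', hY⟩ := exists_shiftSupport_subset_Icc hhered hdec Y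
  have hsupp : {i : ℤ | ∃ f : X ⟶ (epow S₂ i).obj Y, f ≠ 0} ⊆
      Set.Icc (min 0 (a - b')) (max 0 (b - a')) := by
    rintro i ⟨f, hf⟩
    obtain ⟨t, htX, htY⟩ := shiftSupport_inter_nonempty hdec (nontrivial_of_ne f 0 hf)
    have h1 := hX htX
    have h2 := shiftSupport_epow_subset S₂ hhered hdec hSerre i hY htY
    simp only [Set.mem_Icc] at h1 h2 ⊢
    omega
  have hfinite := (Set.finite_Icc _ _).subset hsupp
  have := fun i => hfin X ((epow S₂ i).obj Y)
  exact ⟨hfinite, FiniteDimensional.directSum_of_finite_support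
    (hfinite.subset fun i hi => (nontrivial_iff_exists_ne 0).mp hi)⟩

/-- For the bounded derived category of an acyclic quiver, every pair of objects `X, Y`
satisfies `Hom(X, S₂^i Y) = 0` for all but finitely many `i ∈ ℤ`; hence the orbit
category `D^b(kQ)/S₂`, whose Hom-spaces are `⊕_{i ∈ ℤ} Hom(X, S₂^i Y)`, is Hom-finite. -/
theorem cluster_category_hom_finite (k : Type*) [Field k]
    (D : Type*) [Category D] [Preadditive D] [Linear k D] [HasShift D ℤ]
    [HasFiniteBiproducts D]
    (hfin : ∀ X Y : D, FiniteDimensional k (X ⟶ Y))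
    (S₂ : D ≌ D)
    (hSerre : ∀ X Y : D,
      Nonempty ((X ⟶ Y) ≃ₗ[k] Module.Dual k (Y ⟶ (S₂.functor.obj X)⟦(2 : ℤ)⟧)))
    (G : D)
    -- the "modules" are the objects with no `G`-cohomology outside degree `0`
    (Module? : D → Prop)
    (hMod : ∀ X : D, Module? X ↔ ∀ i : ℤ, i ≠ 0 → ∀ f : G ⟶ X⟦i⟧, f = 0)
    -- hereditariness: every object is a finite direct sum of shifts of modules
    (hdec : ∀ X : D, ∃ (n : ℕ) (M : Fin n → D) (d : Fin n → ℤ),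
      (∀ j, Module? (M j)) ∧ Nonempty (X ≅ ⨁ fun j => (M j)⟦d j⟧))
    -- and morphisms between modules exist only in shift-degrees 0 and 1
    (hhered : ∀ M N : D, Module? M → Module? N →
      ∀ i : ℤ, i ≠ 0 → i ≠ 1 → ∀ f : M ⟶ N⟦i⟧, f = 0) :
    ∀ X Y : D,
      {i : ℤ | ∃ f : X ⟶ (epow S₂ i).obj Y, f ≠ 0}.Finite ∧
      FiniteDimensional k (DirectSum ℤ fun i : ℤ => (X ⟶ (epow S₂ i).obj Y)) :=
  cluster_category_hom_finite_general k D hfin S₂ hSerre Module? hdec hhered
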